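/- arXiv:2211.14059 — 6 statements merged into one kernel-verified Lean document; each statement's English description precedes it below -/
import Mathlib

section
/- Let G be a finite group, φ : G → Aut(K) an action on a field K, and α ∈ Z²(G, K*) a twisted 2-cocycle. Let V be the K-vector space with basis {e_h : h ∈ G}, and for g ∈ G define R_g ∈ GL(V) by R_g(e_h) := α(g,h)^{-1} e_{gh}. Then the map g ↦ ([R_g], φ_g) is a homomorphism G → PGL(V) ⋊ Aut(K), i.e., a semi-projective representation, and its associated cohomology class is [α]. -/
/-- The regular semi-projective representation attached to a twisted 2-cocycle `α`:
on the `K`-vector space `V = G → K` with basis `(e_h)_{h ∈ G}`, the semi-linear map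
attached to `g` is `S g = R g ∘ φ g` (applied coordinatewise), where
`R g (e_h) = α(g,h)⁻¹ e_{g h}`.  Concretely `(S g v) k = α(g, g⁻¹k)⁻¹ · φ_g(v (g⁻¹ k))`. -/
def regularSemiLin {G K : Type*} [Group G] [Field K]
    (φ : G →* (K ≃+* K)) (α : G → G → Kˣ) (g : G) (v : G → K) : G → K :=
  fun k => ((α g (g⁻¹ * k) : K))⁻¹ * φ g (v (g⁻¹ * k))

lemma phi_mul_apply {G K : Type*} [Group G] [Field K]
    (φ : G →* (K ≃+* K)) (g h : G) (x : K) : φ g (φ h x) = φ (g * h) x := by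
  rw [map_mul]; rfl

lemma phi_inv_apply {G K : Type*} [Group G] [Field K]
    (φ : G →* (K ≃+* K)) (g : G) (x : K) : φ g (φ g⁻¹ x) = x := by
  rw [phi_mul_apply, mul_inv_cancel, map_one]; rfl

lemma phi_inv_apply' {G K : Type*} [Group G] [Field K]
    (φ : G →* (K ≃+* K)) (g : G) (x : K) : φ g⁻¹ (φ g x) = x := by
  simpa using phi_inv_apply φ g⁻¹ x

/-- Given a finite group `G` acting on a field `K` via `φ` and a twisted 2-cocycle
`α ∈ Z²(G,K*)`, the maps `S g = regularSemiLin φ α g` are bijective semi-linear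
transformations of `V = G → K` and satisfy `S (g*h) = α g h • (S g ∘ S h)`;
hence `g ↦ ([R g], φ g)` is a semi-projective representation `G → PGL(V) ⋊ Aut(K)`
whose associated cohomology class is `[α]`. -/
theorem regular_semiProjective_representation
    {G K : Type*} [Group G] [Finite G] [Field K]
    (φ : G →* (K ≃+* K)) (α : G → G → Kˣ)
    (hcoc : ∀ g h k, φ g (α h k : K) * ((α (g * h) k : K))⁻¹ * (α g (h * k) : K) *
      ((α g h : K))⁻¹ = 1) :
    (∀ g, Function.Bijective (regularSemiLin φ α g)) ∧
    (∀ g (v w : G → K), regularSemiLin φ α g (v + w)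
        = regularSemiLin φ α g v + regularSemiLin φ α g w) ∧
    (∀ g (c : K) (v : G → K), regularSemiLin φ α g (c • v)
        = φ g c • regularSemiLin φ α g v) ∧
    (∀ g h (v : G → K) (k : G), regularSemiLin φ α (g * h) v k
        = (α g h : K) * regularSemiLin φ α g (regularSemiLin φ α h v) k) := by
  refine ⟨?_, ?_, ?_, ?_⟩
  · intro g
    rw [Function.bijective_iff_has_inverse]
    refine ⟨fun v k => φ g⁻¹ ((α g k : K) * v (g * k)), ?_, ?_⟩
    · intro v
      funext k
      simp only [regularSemiLin, inv_mul_cancel_left]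
      rw [mul_inv_cancel_left₀ (Units.ne_zero _), phi_inv_apply']
    · intro v
      funext k
      simp only [regularSemiLin, mul_inv_cancel_left, phi_inv_apply]
      rw [← mul_assoc, inv_mul_cancel₀ (Units.ne_zero _), one_mul]
  · intro g v w
    funext k
    simp only [regularSemiLin, Pi.add_apply, map_add]
    ring
  · intro g c v
    funext k
    simp only [regularSemiLin, Pi.smul_apply, smul_eq_mul, map_mul]
    ring
  · intro g h v k
    simp only [regularSemiLin, mul_inv_rev, mul_assoc, map_mul, map_inv₀, phi_mul_apply]
    have hc := hcoc g h (h⁻¹ * (g⁻¹ * k))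
    rw [show h * (h⁻¹ * (g⁻¹ * k)) = g⁻¹ * k by group] at hc
    have hA : (φ g) ((α h (h⁻¹ * (g⁻¹ * k)) : K)) ≠ 0 := by
      simp [Units.ne_zero]
    set k' := h⁻¹ * (g⁻¹ * k) with hk'
    set Y := (φ g * φ h) (v k') with hYe
    set A := (φ g) ((α h k' : K)) with hAe
    set B := ((α (g * h) k' : K)) with hBe
    set C := ((α g (g⁻¹ * k) : K)) with hCe
    set D := ((α g h : K)) with hDe
    have hB : B ≠ 0 := Units.ne_zero _
    have hC : C ≠ 0 := Units.ne_zero _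
    have hD : D ≠ 0 := Units.ne_zero _
    field_simp at hc ⊢
    linear_combination Y * hc
end

section
/- Let 1 → A → Γ → G → 1 be an extension of a finite group G by a finite abelian group A, with associated cohomology class [β] ∈ H²(G,A), and let G act on a field K via φ : G → Aut(K). If a semi-projective representation f : G → PΓL(V) with class [α] ∈ H²(G,K*) is induced by a semi-linear representation F : Γ → ΓL(V) (i.e., F_γ is a scalar multiple of f_{π(γ)} for all γ, with f_1 = id), then [α] lies in the image of the transgression map tra : Hom_G(A, K*) → H²(G, K*), λ ↦ [λ ∘ β]. -/
/-!
Write `F γ = c γ • f (π γ)`. Comparing `F (γδ)` with `F γ ∘ F δ` shows that the inflation of `α`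
to `Γ` is the coboundary of the cochain `c` (with `Γ` acting on `K` through `φ ∘ π`). Restricted to
the kernel `A` of `π`, where the inflated cocycle is trivial, this coboundary relation says that
`λ := c ∘ ι` is a `G`-equivariant character of `A`; evaluated along the section `s` it reads
`α = (λ ∘ β) · ∂(c ∘ s)`.
-/

def TrivializesInflation {G Γ K : Type*} [Group G] [Group Γ] [Field K]
    (φ : G →* K ≃+* K) (π : Γ →* G) (α : G → G → Kˣ) (c : Γ → Kˣ) : Prop :=
  ∀ γ δ, (c (γ * δ) : K) * α (π γ) (π δ) = c γ * φ (π γ) (c δ)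

section SemilinearLift

variable {G Γ K V : Type*} [Group G] [Group Γ] [Field K] [AddCommGroup V] [Module K V]
  [Nontrivial V]

theorem eq_of_smul_apply_eq_smul_apply {u : V → V} (hu : Function.Surjective u) {a b : K}
    (h : ∀ v, a • u v = b • u v) : a = b :=
  eq_of_smul_eq_smul (hu.forall.2 h)

variable {φ : G →* K ≃+* K} {f : G → V → V} {α : G → G → Kˣ}

theorem cocycle_one_left (hone : f 1 = id) (hsurj : ∀ g, Function.Surjective (f g))
    (hα : ∀ g h (v : V), f (g * h) v = (α g h : K) • f g (f h v)) (h : G) :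
    (α 1 h : K) = 1 :=
  eq_of_smul_apply_eq_smul_apply (hsurj h) fun v => by
    simpa [hone] using (hα 1 h v).symm

theorem cocycle_one_right (hone : f 1 = id) (hsurj : ∀ g, Function.Surjective (f g))
    (hα : ∀ g h (v : V), f (g * h) v = (α g h : K) • f g (f h v)) (g : G) :
    (α g 1 : K) = 1 :=
  eq_of_smul_apply_eq_smul_apply (hsurj g) fun v => by
    simpa [hone] using (hα g 1 v).symm

theorem trivializesInflation_of_lift {π : Γ →* G} {F : Γ → V → V} {c : Γ → Kˣ}
    (hsurj : ∀ g, Function.Surjective (f g))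
    (hsl : ∀ g (a : K) (v : V), f g (a • v) = φ g a • f g v)
    (hα : ∀ g h (v : V), f (g * h) v = (α g h : K) • f g (f h v))
    (hF : ∀ γ δ (v : V), F (γ * δ) v = F γ (F δ v))
    (hc : ∀ γ v, F γ v = (c γ : K) • f (π γ) v) :
    TrivializesInflation φ π α c := by
  intro γ δ
  refine eq_of_smul_apply_eq_smul_apply ((hsurj (π γ)).comp (hsurj (π δ))) fun v => ?_
  calc ((c (γ * δ) : K) * α (π γ) (π δ)) • f (π γ) (f (π δ) v)
      = F (γ * δ) v := by rw [hc, map_mul, hα, smul_smul]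
    _ = ((c γ : K) * φ (π γ) (c δ)) • f (π γ) (f (π δ) v) := by
      rw [hF, hc δ, hc γ, hsl, smul_smul]

end SemilinearLift

namespace TrivializesInflation

variable {G Γ A K : Type*} [Group G] [Group Γ] [CommGroup A] [Field K]
  {φ : G →* K ≃+* K} {π : Γ →* G} {α : G → G → Kˣ} {c : Γ → Kˣ}

theorem mul_left_of_mem_ker (hc : TrivializesInflation φ π α c)
    (hα : ∀ h, (α 1 h : K) = 1) {x : Γ} (hx : π x = 1) (γ : Γ) :
    (c (x * γ) : K) = c x * c γ := by
  simpa [hx, hα] using hc x γ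

theorem mul_right_of_mem_ker (hc : TrivializesInflation φ π α c)
    (hα : ∀ g, (α g 1 : K) = 1) (γ : Γ) {x : Γ} (hx : π x = 1) :
    (c (γ * x) : K) = c γ * φ (π γ) (c x) := by
  simpa [hx, hα] using hc γ x

theorem apply_of_mul_eq_mul (hc : TrivializesInflation φ π α c)
    (hα₁ : ∀ h, (α 1 h : K) = 1) (hα₂ : ∀ g, (α g 1 : K) = 1) {γ x y : Γ}
    (hx : π x = 1) (hy : π y = 1) (hxy : y * γ = γ * x) :
    (c y : K) = φ (π γ) (c x) := by
  have h := hc.mul_left_of_mem_ker hα₁ hy γ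
  rw [hxy, hc.mul_right_of_mem_ker hα₂ γ hx, mul_comm] at h
  exact mul_right_cancel₀ (c γ).ne_zero h.symm

theorem exists_transgression (hc : TrivializesInflation φ π α c)
    (hα₁ : ∀ h, (α 1 h : K) = 1) (hα₂ : ∀ g, (α g 1 : K) = 1)
    (ι : A →* Γ) (hι : ∀ a, π (ι a) = 1)
    (s : G → Γ) (hs : ∀ g, π (s g) = g)
    (β : G → G → A) (hβ : ∀ g h, s (g * h) = ι (β g h) * s g * s h)
    (act : G → A → A) (hact : ∀ g a, ι (act g a) = s g * ι a * (s g)⁻¹) :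
    ∃ lam : A →* Kˣ,
      (∀ g a, lam (act g a) = Units.map (φ g).toRingHom.toMonoidHom (lam a)) ∧
      ∃ τ : G → Kˣ, ∀ g h,
        (α g h : K) = lam (β g h) * (φ g (τ h : K) * (τ (g * h) : K)⁻¹ * (τ g : K)) := by
  refine ⟨MonoidHom.mk' (fun a => c (ι a)) fun a b => Units.ext ?_, fun g a => Units.ext ?_,
    fun g => c (s g), fun g h => ?_⟩
  · simpa using hc.mul_left_of_mem_ker hα₁ (hι a) (ι b)
  · simpa [hs] using hc.apply_of_mul_eq_mul hα₁ hα₂ (γ := s g) (hι a) (hι (act g a))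
      (by rw [hact, inv_mul_cancel_right])
  · have hcoboundary := hc (s g) (s h)
    rw [hs, hs] at hcoboundary
    have hsection : (c (s (g * h)) : K) = c (ι (β g h)) * c (s g * s h) := by
      rw [hβ, mul_assoc, hc.mul_left_of_mem_ker hα₁ (hι _)]
    simp only [MonoidHom.mk'_apply, hsection]
    field_simp
    linear_combination hcoboundary

end TrivializesInflation

theorem transgression_of_semiLinear_lift_general
    {G K V A Γ : Type*} [Group G] [Field K]
    [AddCommGroup V] [Module K V] [Nontrivial V]
    [CommGroup A] [Group Γ]
    (φ : G →* (K ≃+* K))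
    (ι : A →* Γ) (π : Γ →* G)
    (hker : ι.range = π.ker)
    (s : G → Γ) (hs : ∀ g, π (s g) = g)
    (β : G → G → A) (hβ : ∀ g h, s (g * h) = ι (β g h) * s g * s h)
    (act : G → A → A) (hact : ∀ g a, ι (act g a) = s g * ι a * (s g)⁻¹)
    (f : G → V → V) (α : G → G → Kˣ)
    (hone : f 1 = id)
    (hbij : ∀ g, Function.Bijective (f g))
    (hsl : ∀ g (c : K) (v : V), f g (c • v) = φ g c • f g v)
    (hα : ∀ g h (v : V), f (g * h) v = (α g h : K) • f g (f h v))
    (F : Γ → V → V)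
    (hF : ∀ γ δ (v : V), F (γ * δ) v = F γ (F δ v))
    (hFf : ∀ γ, ∃ c : Kˣ, ∀ v, F γ v = (c : K) • f (π γ) v) :
    ∃ lam : A →* Kˣ,
      (∀ g a, lam (act g a) = Units.map (φ g).toRingHom.toMonoidHom (lam a)) ∧
      ∃ τ : G → Kˣ, ∀ g h,
        (α g h : K) = lam (β g h) * (φ g (τ h : K) * (τ (g * h) : K)⁻¹ * (τ g : K)) := by
  choose c hc using hFf
  have hsurj : ∀ g, Function.Surjective (f g) := fun g => (hbij g).2
  have hι : ∀ a, π (ι a) = 1 := fun a => π.mem_ker.mp (hker ▸ ⟨a, rfl⟩)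
  exact (trivializesInflation_of_lift hsurj hsl hα hF hc).exists_transgression
    (cocycle_one_left hone hsurj hα) (cocycle_one_right hone hsurj hα) ι hι s hs β hβ act hact

/-- Let `1 → A → Γ → G → 1` be an extension of a finite group `G` by a finite
abelian group `A`, with set-theoretic section `s`, extension 2-cocycle `β`
(`s(gh) = β(g,h)·s(g)·s(h)`) and conjugation action `act` of `G` on `A`
(`ι(g∗a) = s(g)·ι(a)·s(g)⁻¹`), and let `G` act on the field `K` via `φ`.
If a semi-projective representation `f : G → PΓL(V)` with cocycle `α`
(given by representatives `f g` with `f 1 = id` and `f(gh) = α(g,h)·(f g ∘ f h)`)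
is induced by a semi-linear representation `F : Γ → ΓL(V)`, then `[α]` lies in
the image of the transgression map `Hom_G(A,Kˣ) → H²(G,Kˣ)`, `λ ↦ [λ ∘ β]`;
i.e. `α` is cohomologous to `λ ∘ β` for some `G`-equivariant `λ : A →* Kˣ`. -/
theorem transgression_of_semiLinear_lift
    {G K V A Γ : Type*} [Group G] [Finite G] [Field K]
    [AddCommGroup V] [Module K V] [Nontrivial V] [FiniteDimensional K V]
    [CommGroup A] [Finite A] [Group Γ]
    (φ : G →* (K ≃+* K))
    (ι : A →* Γ) (π : Γ →* G)
    (hι : Function.Injective ι) (hπ : Function.Surjective π)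
    (hker : ι.range = π.ker)
    (s : G → Γ) (hs : ∀ g, π (s g) = g)
    (β : G → G → A) (hβ : ∀ g h, s (g * h) = ι (β g h) * s g * s h)
    (act : G → A → A) (hact : ∀ g a, ι (act g a) = s g * ι a * (s g)⁻¹)
    (f : G → V → V) (α : G → G → Kˣ)
    (hone : f 1 = id)
    (hadd : ∀ g (v w : V), f g (v + w) = f g v + f g w)
    (hbij : ∀ g, Function.Bijective (f g))
    (hsl : ∀ g (c : K) (v : V), f g (c • v) = φ g c • f g v)
    (hα : ∀ g h (v : V), f (g * h) v = (α g h : K) • f g (f h v))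
    (F : Γ → V → V)
    (hF : ∀ γ δ (v : V), F (γ * δ) v = F γ (F δ v))
    (hFf : ∀ γ, ∃ c : Kˣ, ∀ v, F γ v = (c : K) • f (π γ) v) :
    ∃ lam : A →* Kˣ,
      (∀ g a, lam (act g a) = Units.map (φ g).toRingHom.toMonoidHom (lam a)) ∧
      ∃ τ : G → Kˣ, ∀ g h,
        (α g h : K) = lam (β g h) * (φ g (τ h : K) * (τ (g * h) : K)⁻¹ * (τ g : K)) :=
  transgression_of_semiLinear_lift_general φ ι π hker s hs β hβ act hact f α hone hbij hsl hα F hF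
    hFf
end

section
/- Let 1 → A → Γ →^π G → 1 be an extension of a finite group G by a finite abelian group A with 2-cocycle β, and G act on K via φ. If a semi-projective representation f : G → PΓL(V) has class [α] in the image of the transgression, i.e., α(g,h) = λ(β(g,h))·φ_g(τ(h))·τ(gh)^{-1}·τ(g) for some λ ∈ Hom_G(A,K*) and τ : G → K*, then the map F : Γ → ΓL(V), a·s(g) ↦ λ(a)τ(g)f_g, is a homomorphism (semi-linear representation) inducing f. -/
/-- Converse to the transgression theorem.  Let `1 → A → Γ →π G → 1` be an
extension of a finite group `G` by a finite abelian group `A`, with set-theoretic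
section `s`, cocycle `β`, conjugation action `act`, and retraction `r` (so that
every `γ ∈ Γ` decomposes uniquely as `γ = ι(r γ)·s(π γ)`), and let `G` act on `K`
via `φ`.  Let `f : G → PΓL(V)` be a semi-projective representation with cocycle
`α` whose class lies in the image of the transgression, i.e.
`α(g,h) = λ(β(g,h))·φ_g(τ h)·τ(gh)⁻¹·τ g` for some `G`-equivariant `λ : A →* Kˣ`
and `τ : G → Kˣ`.  Then `F : Γ → ΓL(V)`, `a·s(g) ↦ λ(a)τ(g)·f g`, is a group
homomorphism (a semi-linear representation) inducing `f`. -/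
theorem semiLinear_lift_of_transgression
    {G K V A Γ : Type*} [Group G] [Finite G] [Field K]
    [AddCommGroup V] [Module K V] [Nontrivial V] [FiniteDimensional K V]
    [CommGroup A] [Finite A] [Group Γ]
    (φ : G →* (K ≃+* K))
    (ι : A →* Γ) (π : Γ →* G)
    (hι : Function.Injective ι) (hπ : Function.Surjective π)
    (hker : ι.range = π.ker)
    (s : G → Γ) (hs : ∀ g, π (s g) = g)
    (β : G → G → A) (hβ : ∀ g h, s (g * h) = ι (β g h) * s g * s h)
    (act : G → A → A) (hact : ∀ g a, ι (act g a) = s g * ι a * (s g)⁻¹)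
    (r : Γ → A) (hr : ∀ γ, γ = ι (r γ) * s (π γ))
    (f : G → V → V) (α : G → G → Kˣ)
    (hone : f 1 = id)
    (hadd : ∀ g (v w : V), f g (v + w) = f g v + f g w)
    (hbij : ∀ g, Function.Bijective (f g))
    (hsl : ∀ g (c : K) (v : V), f g (c • v) = φ g c • f g v)
    (hα : ∀ g h (v : V), f (g * h) v = (α g h : K) • f g (f h v))
    (lam : A →* Kˣ)
    (hlam : ∀ g a, lam (act g a) = Units.map (φ g).toRingHom.toMonoidHom (lam a))
    (τ : G → Kˣ)
    (hform : ∀ g h,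
      (α g h : K) = lam (β g h) * (φ g (τ h : K) * (τ (g * h) : K)⁻¹ * (τ g : K))) :
    (∀ γ δ (v : V),
        ((lam (r (γ * δ)) : K) * (τ (π (γ * δ)) : K)) • f (π (γ * δ)) v
          = ((lam (r γ) : K) * (τ (π γ) : K)) • f (π γ)
              (((lam (r δ) : K) * (τ (π δ) : K)) • f (π δ) v)) ∧
    (∀ γ, ∃ c : Kˣ, ∀ v : V,
        ((lam (r γ) : K) * (τ (π γ) : K)) • f (π γ) v = (c : K) • f (π γ) v) := by

  constructor
  · intro γ δ v
    set g := π γ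
    set h := π δ
    have hπγδ : π (γ * δ) = g * h := by simp [g, h]
    have hrγδ : r (γ * δ) = r γ * act g (r δ) * (β g h)⁻¹ := by
      apply hι
      have h1 : ι (r (γ * δ)) * s (g * h) = γ * δ := by
        rw [← hπγδ]; exact (hr (γ * δ)).symm
      have h2 : γ * δ = ι (r γ * act g (r δ) * (β g h)⁻¹) * s (g * h) := by
        have hγ := hr γ
        have hδ := hr δ
        have hcomm : s g * ι (r δ) = ι (act g (r δ)) * s g := by
          rw [hact]; group
        calc γ * δ = (ι (r γ) * s g) * (ι (r δ) * s h) := by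
              rw [← hγ, ← hδ]
          _ = ι (r γ) * (s g * ι (r δ)) * s h := by
              simp [mul_assoc]
          _ = ι (r γ) * (ι (act g (r δ)) * s g) * s h := by rw [hcomm]
          _ = ι (r γ * act g (r δ) * (β g h)⁻¹) * s (g * h) := by
              rw [hβ, map_mul, map_mul, map_inv]
              simp [mul_assoc]
      have := h1.trans h2
      exact mul_right_cancel this
    rw [hπγδ, hα g h v, hrγδ, hsl, smul_smul, smul_smul]
    congr 1
    have hφlam : (lam (act g (r δ)) : K) = φ g (lam (r δ) : K) := by
      rw [hlam]; rfl
    rw [hform g h, map_mul (φ g), map_mul lam, map_mul lam, map_inv lam]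
    push_cast
    rw [hφlam]
    have hτ : (τ (g * h) : K) ≠ 0 := Units.ne_zero _
    have hβτ : (lam (β g h) : K) ≠ 0 := Units.ne_zero _
    field_simp
  · intro γ
    exact ⟨lam (r γ) * τ (π γ), fun v => by push_cast; rfl⟩
end

section
/- Let G act trivially on an algebraically closed field K, and let 1 → A → Γ → G → 1 be an extension with A finite abelian satisfying: char(K) ∤ |A|, Hom_G(A,K*) = Hom(A,K*), and the transgression Hom_G(A,K*) → H²(G,K*) is an isomorphism. Then the extension is a stem extension: A is contained in the center of Γ and in the commutator subgroup [Γ,Γ]. -/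
section TwistedSchur

variable {G K : Type*} [Group G] [Field K]

/-- The action of `g ∈ G` on `Kˣ` induced by the action `φ` of `G` on the field `K`. -/
def uAct (φ : G →* (K ≃+* K)) (g : G) : Kˣ →* Kˣ :=
  Units.map (φ g).toRingHom.toMonoidHom

/-- The twisted 2-coboundary `∂τ(g,h) = φ_g(τ h) · τ(gh)⁻¹ · τ g`. -/
def d1 (φ : G →* (K ≃+* K)) (τ : G → Kˣ) : G → G → Kˣ :=
  fun g h => uAct φ g (τ h) * (τ (g * h))⁻¹ * τ g

/-- The twisted 2-cocycle condition
`φ_g(α(h,k)) · α(gh,k)⁻¹ · α(g,hk) · α(g,h)⁻¹ = 1`. -/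
def IsCocycle2 (φ : G →* (K ≃+* K)) (α : G → G → Kˣ) : Prop :=
  ∀ g h k, uAct φ g (α h k) * (α (g * h) k)⁻¹ * α g (h * k) * (α g h)⁻¹ = 1

/-- The group `Z²(G,Kˣ)` of twisted 2-cocycles. -/
abbrev Z2 (φ : G →* (K ≃+* K)) : Subgroup (G → G → Kˣ) :=
  Subgroup.closure {α | IsCocycle2 φ α}

/-- The group `B²(G,Kˣ)` of twisted 2-coboundaries. -/
abbrev B2 (φ : G →* (K ≃+* K)) : Subgroup (G → G → Kˣ) :=
  Subgroup.closure (Set.range (d1 φ))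

/-- The twisted Schur multiplier `H²(G,Kˣ) = Z²/B²`. -/
abbrev H2 (φ : G →* (K ≃+* K)) :=
  Z2 φ ⧸ ((B2 φ).subgroupOf (Z2 φ))

end TwistedSchur

/-!
Since the action of `G` on `Kˣ` is trivial, the equivariance of every character of `A` says that
characters cannot tell `a` from its conjugates `s g * a * (s g)⁻¹`; as `char K ∤ |A|`, characters
of `A` separate points, so `A` is central. A character `f` of `Γ` restricts to a character of `A`
whose transgression is the coboundary of `g ↦ (f (s g))⁻¹`, so by injectivity of the
transgression `f` is trivial on `A`. Since characters of the finite abelian group `Γ^ab` separate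
its elements of order prime to `char K`, `A` lies in `[Γ, Γ]`.
-/

section Characters

/-- For `p ^ k` the `p`-part of the exponent, `x ↦ x ^ p ^ k` maps `H` onto its prime-to-`p`
part. -/
theorem exists_pow_ne_one_and_not_dvd_exponent_range {H : Type*} [CommGroup H] [Finite H]
    {p : ℕ} (hp : p.Prime) {x : H} (hx : x ≠ 1) (hpx : ¬ p ∣ orderOf x) :
    ∃ k : ℕ, x ^ p ^ k ≠ 1 ∧ ¬ p ∣ Monoid.exponent (powMonoidHom (p ^ k) : H →* H).range := by
  obtain ⟨k, m, hpm, hexp⟩ :=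
    Nat.exists_eq_pow_mul_and_not_dvd (Monoid.exponent_ne_zero_of_finite (G := H)) p hp.ne_one
  refine ⟨k, fun hxk => hx ?_, fun hdvd => hpm (hdvd.trans ?_)⟩
  · have hcop : (orderOf x).Coprime (p ^ k) :=
      ((hp.coprime_iff_not_dvd.2 hpx).symm).pow_right k
    exact orderOf_eq_one_iff.1 (hcop.eq_one_of_dvd (orderOf_dvd_of_pow_eq_one hxk))
  · refine Monoid.exponent_dvd_of_forall_pow_eq_one ?_
    rintro ⟨_, z, rfl⟩
    ext
    change (z ^ p ^ k) ^ m = 1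
    rw [← pow_mul, ← hexp, Monoid.pow_exponent_eq_one]

variable {K H : Type*} [Field K] [IsAlgClosed K] [CommGroup H] [Finite H]

theorem exists_monoidHom_apply_ne_one_of_not_dvd_orderOf {x : H} (hx : x ≠ 1)
    (hpx : ¬ ringChar K ∣ orderOf x) : ∃ χ : H →* Kˣ, χ x ≠ 1 := by
  rcases CharP.char_is_prime_or_zero K (ringChar K) with hp | hzero
  · obtain ⟨k, hxk, hexp⟩ := exists_pow_ne_one_and_not_dvd_exponent_range hp hx hpx
    set f : H →* H := powMonoidHom (ringChar K ^ k)
    have : NeZero (Monoid.exponent f.range : K) := ⟨(ringChar.spec K _).not.2 hexp⟩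
    obtain ⟨χ, hχ⟩ := CommGroup.exists_apply_ne_one_of_hasEnoughRootsOfUnity f.range K
      (a := f.rangeRestrict x) fun h => hxk (congrArg Subtype.val h)
    exact ⟨χ.comp f.rangeRestrict, hχ⟩
  · have : NeZero (Monoid.exponent H : K) := ⟨by
      rw [Ne, ringChar.spec, hzero, zero_dvd_iff]
      exact Monoid.exponent_ne_zero_of_finite⟩
    exact CommGroup.exists_apply_ne_one_of_hasEnoughRootsOfUnity H K hx

theorem eq_of_forall_monoidHom_apply_eq (hchar : ¬ ringChar K ∣ Nat.card H) {x y : H}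
    (h : ∀ χ : H →* Kˣ, χ x = χ y) : x = y := by
  by_contra hne
  obtain ⟨χ, hχ⟩ := exists_monoidHom_apply_ne_one_of_not_dvd_orderOf (K := K)
    (fun h => hne (mul_inv_eq_one.1 h)) fun hdvd => hchar (hdvd.trans (orderOf_dvd_natCard _))
  exact hχ (by rw [map_mul, map_inv, h, mul_inv_cancel])

theorem mem_commutator_of_forall_monoidHom_apply_eq_one {Γ : Type*} [Group Γ] [Finite Γ] {x : Γ}
    (hx : ¬ ringChar K ∣ orderOf x) (h : ∀ χ : Γ →* Kˣ, χ x = 1) : x ∈ commutator Γ := by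
  by_contra hmem
  obtain ⟨χ, hχ⟩ := exists_monoidHom_apply_ne_one_of_not_dvd_orderOf (K := K)
    (x := Abelianization.of x) (fun h => hmem ((QuotientGroup.eq_one_iff _).1 h))
    fun hdvd => hx (hdvd.trans (orderOf_map_dvd _ _))
  exact hχ (h (χ.comp Abelianization.of))

end Characters

theorem uAct_eq_self {G K : Type*} [Group G] [Field K] {φ : G →* (K ≃+* K)}
    (htriv : ∀ g (x : K), φ g x = x) (g : G) (u : Kˣ) : uAct φ g u = u :=
  Units.ext (htriv g u)

section Extension

variable {G A Γ : Type*} [Group G] [CommGroup A] [Group Γ] {ι : A →* Γ} {π : Γ →* G}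
  {s : G → Γ}

theorem finite_of_extension [Finite A] [Finite G] (hker : ι.range = π.ker) : Finite Γ :=
  π.finite_iff_finite_ker_range.2
    ⟨hker ▸ Finite.of_surjective _ ι.rangeRestrict_surjective, inferInstance⟩

theorem exists_eq_mul_section (hker : ι.range = π.ker) (hs : ∀ g, π (s g) = g) (γ : Γ) :
    ∃ b : A, γ = ι b * s (π γ) := by
  obtain ⟨b, hb⟩ : γ * (s (π γ))⁻¹ ∈ ι.range := by
    rw [hker, MonoidHom.mem_ker, map_mul, map_inv, hs, mul_inv_cancel]
  exact ⟨b, by rw [hb, inv_mul_cancel_right]⟩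

theorem mem_center_of_forall_conj_section_eq (hker : ι.range = π.ker) (hs : ∀ g, π (s g) = g)
    {a : A} (hconj : ∀ g, s g * ι a * (s g)⁻¹ = ι a) : ι a ∈ Subgroup.center Γ := by
  refine Subgroup.mem_center_iff.2 fun γ => ?_
  obtain ⟨b, hb⟩ := exists_eq_mul_section hker hs γ
  have hb_comm : Commute (ι b) (ι a) := (Commute.all b a).map ι
  have hs_comm : Commute (s (π γ)) (ι a) := (eq_mul_inv_iff_mul_eq.1 (hconj _).symm).symm
  rw [hb]
  exact hb_comm.mul_left hs_comm

theorem map_factorSet_eq_d1 {K : Type*} [Field K] {φ : G →* (K ≃+* K)}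
    (htriv : ∀ g (x : K), φ g x = x) {β : G → G → A}
    (hβ : ∀ g h, s (g * h) = ι (β g h) * s g * s h) (f : Γ →* Kˣ) (g h : G) :
    f (ι (β g h)) = d1 φ (fun g => (f (s g))⁻¹) g h := by
  have hιβ : ι (β g h) = s (g * h) * (s h)⁻¹ * (s g)⁻¹ := by
    rw [hβ]
    group
  rw [hιβ, d1, uAct_eq_self htriv]
  simp only [map_mul, map_inv, inv_inv]
  ac_rfl

end Extension

theorem stem_of_twisted_representation_group_general
    {G K A Γ : Type*} [Group G] [Finite G] [Field K] [IsAlgClosed K]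
    [CommGroup A] [Finite A] [Group Γ]
    (φ : G →* (K ≃+* K)) (htriv : ∀ g (x : K), φ g x = x)
    (ι : A →* Γ) (π : Γ →* G)
    (hker : ι.range = π.ker)
    (s : G → Γ) (hs : ∀ g, π (s g) = g)
    (β : G → G → A) (hβ : ∀ g h, s (g * h) = ι (β g h) * s g * s h)
    (act : G → A → A) (hact : ∀ g a, ι (act g a) = s g * ι a * (s g)⁻¹)
    (hchar : ¬ (ringChar K ∣ Nat.card A))
    (hHomG : ∀ lam : A →* Kˣ, ∀ g a, lam (act g a) = uAct φ g (lam a))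
    (htra_inj : ∀ lam lam' : A →* Kˣ,
      (∀ g a, lam (act g a) = uAct φ g (lam a)) →
      (∀ g a, lam' (act g a) = uAct φ g (lam' a)) →
      (∃ τ : G → Kˣ, ∀ g h, lam' (β g h) = lam (β g h) * d1 φ τ g h) → lam = lam') :
    ∀ a : A, ι a ∈ Subgroup.center Γ ∧ ι a ∈ commutator Γ := by
  have : Finite Γ := finite_of_extension hker
  have hact_triv : ∀ g a, act g a = a := fun g a =>
    eq_of_forall_monoidHom_apply_eq hchar fun χ => by rw [hHomG, uAct_eq_self htriv]
  have hkill : ∀ (f : Γ →* Kˣ) (a : A), f (ι a) = 1 := fun f a => by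
    have hres : (1 : A →* Kˣ) = f.comp ι :=
      htra_inj 1 (f.comp ι) (fun g a => by simp only [MonoidHom.one_apply, map_one])
        (hHomG _) ⟨_, fun g h => by
          rw [MonoidHom.comp_apply, map_factorSet_eq_d1 htriv hβ, MonoidHom.one_apply, one_mul]⟩
    exact (DFunLike.congr_fun hres a).symm
  refine fun a => ⟨mem_center_of_forall_conj_section_eq hker hs fun g => ?_, ?_⟩
  · rw [← hact, hact_triv]
  · exact mem_commutator_of_forall_monoidHom_apply_eq_one
      (fun hdvd => hchar (hdvd.trans ((orderOf_map_dvd ι a).trans (orderOf_dvd_natCard a))))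
      fun χ => hkill χ a

/-- Let `G` act trivially on an algebraically closed field `K`, and let
`1 → A → Γ → G → 1` be an extension with `A` finite abelian satisfying
`char(K) ∤ |A|`, `Hom_G(A,Kˣ) = Hom(A,Kˣ)` (every character of `A` is
`G`-equivariant), and such that the transgression `Hom_G(A,Kˣ) → H²(G,Kˣ)` is an
isomorphism.  Then the extension is stem: `A` is contained in the center of `Γ`
and in the commutator subgroup `[Γ,Γ]`. -/
theorem stem_of_twisted_representation_group
    {G K A Γ : Type*} [Group G] [Finite G] [Field K] [IsAlgClosed K]
    [CommGroup A] [Finite A] [Group Γ]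
    (φ : G →* (K ≃+* K)) (htriv : ∀ g (x : K), φ g x = x)
    (ι : A →* Γ) (π : Γ →* G)
    (hι : Function.Injective ι) (hπ : Function.Surjective π)
    (hker : ι.range = π.ker)
    (s : G → Γ) (hs : ∀ g, π (s g) = g)
    (β : G → G → A) (hβ : ∀ g h, s (g * h) = ι (β g h) * s g * s h)
    (act : G → A → A) (hact : ∀ g a, ι (act g a) = s g * ι a * (s g)⁻¹)
    (hchar : ¬ (ringChar K ∣ Nat.card A))
    (hHomG : ∀ lam : A →* Kˣ, ∀ g a, lam (act g a) = uAct φ g (lam a))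
    (htra_inj : ∀ lam lam' : A →* Kˣ,
      (∀ g a, lam (act g a) = uAct φ g (lam a)) →
      (∀ g a, lam' (act g a) = uAct φ g (lam' a)) →
      (∃ τ : G → Kˣ, ∀ g h, lam' (β g h) = lam (β g h) * d1 φ τ g h) → lam = lam')
    (htra_surj : ∀ α : G → G → Kˣ, IsCocycle2 φ α →
      ∃ lam : A →* Kˣ, (∀ g a, lam (act g a) = uAct φ g (lam a)) ∧
        ∃ τ : G → Kˣ, ∀ g h, α g h = lam (β g h) * d1 φ τ g h) :
    ∀ a : A, ι a ∈ Subgroup.center Γ ∧ ι a ∈ commutator Γ :=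
  stem_of_twisted_representation_group_general φ htriv ι π hker s hs β hβ act hact hchar hHomG
    htra_inj
end

section
/- Let G be a finite group acting trivially on an algebraically closed field K, and let 1 → A → Γ → G → 1 be a stem extension with A finite abelian and |A| = |H²(G,K*)|. Then char(K) ∤ |A|, Hom_G(A,K*) = Hom(A,K*), and the transgression map Hom_G(A,K*) → H²(G,K*) is an isomorphism. -/
section Aux

variable {G K : Type*} [Group G] [Field K]

lemma uAct_triv (φ : G →* (K ≃+* K)) (htriv : ∀ g (x : K), φ g x = x) (g : G) (u : Kˣ) :
    uAct φ g u = u := by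
  ext
  exact htriv g u

lemma d1_mul (φ : G →* (K ≃+* K)) (τ τ' : G → Kˣ) :
    d1 φ (τ * τ') = d1 φ τ * d1 φ τ' := by
  funext g h
  simp only [d1, Pi.mul_apply, map_mul, mul_inv]
  simp [mul_comm, mul_left_comm, mul_assoc]

/-- `d1` as a monoid hom. -/
def Dhom (φ : G →* (K ≃+* K)) : (G → Kˣ) →* (G → G → Kˣ) :=
  MonoidHom.mk' (d1 φ) (d1_mul φ)

lemma B2_eq (φ : G →* (K ≃+* K)) : B2 φ = (Dhom φ).range := by
  have h : Set.range (d1 φ) = ((Dhom φ).range : Set (G → G → Kˣ)) := by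
    rw [MonoidHom.coe_range]; rfl
  rw [B2, h, Subgroup.closure_eq]

lemma mem_B2 (φ : G →* (K ≃+* K)) {x : G → G → Kˣ} :
    x ∈ B2 φ ↔ ∃ τ, d1 φ τ = x := by
  rw [B2_eq]
  exact MonoidHom.mem_range

end Aux

set_option maxHeartbeats 1000000 in
/-- Let `G` be a finite group acting trivially on an algebraically closed field
`K`, and let `1 → A → Γ → G → 1` be a stem extension with `A` finite abelian and
`|A| = |H²(G,Kˣ)|`.  Then `char(K) ∤ |A|`, every character of `A` is
`G`-equivariant (`Hom_G(A,Kˣ) = Hom(A,Kˣ)`), and the transgression map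
`Hom_G(A,Kˣ) → H²(G,Kˣ)` is an isomorphism. -/
theorem twisted_representation_group_of_stem
    {G K A Γ : Type*} [Group G] [Finite G] [Field K] [IsAlgClosed K]
    [CommGroup A] [Finite A] [Group Γ]
    (φ : G →* (K ≃+* K)) (htriv : ∀ g (x : K), φ g x = x)
    (ι : A →* Γ) (π : Γ →* G)
    (hι : Function.Injective ι) (hπ : Function.Surjective π)
    (hker : ι.range = π.ker)
    (s : G → Γ) (hs : ∀ g, π (s g) = g)
    (β : G → G → A) (hβ : ∀ g h, s (g * h) = ι (β g h) * s g * s h)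
    (act : G → A → A) (hact : ∀ g a, ι (act g a) = s g * ι a * (s g)⁻¹)
    (hstem : ∀ a : A, ι a ∈ Subgroup.center Γ ∧ ι a ∈ commutator Γ)
    (hcard : Nat.card A = Nat.card (H2 φ)) :
    (¬ (ringChar K ∣ Nat.card A)) ∧
    (∀ lam : A →* Kˣ, ∀ g a, lam (act g a) = uAct φ g (lam a)) ∧
    (∀ lam lam' : A →* Kˣ,
      (∀ g a, lam (act g a) = uAct φ g (lam a)) →
      (∀ g a, lam' (act g a) = uAct φ g (lam' a)) →
      (∃ τ : G → Kˣ, ∀ g h, lam' (β g h) = lam (β g h) * d1 φ τ g h) → lam = lam') ∧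
    (∀ α : G → G → Kˣ, IsCocycle2 φ α →
      ∃ lam : A →* Kˣ, (∀ g a, lam (act g a) = uAct φ g (lam a)) ∧
        ∃ τ : G → Kˣ, ∀ g h, α g h = lam (β g h) * d1 φ τ g h) := by
  classical
  -- centrality
  have hcent : ∀ (a : A) (x : Γ), x * ι a = ι a * x := fun a x =>
    Subgroup.mem_center_iff.mp (hstem a).1 x
  -- the action is trivial
  have hactid : ∀ g a, act g a = a := by
    intro g a
    apply hι
    rw [hact, hcent a (s g)]
    group
  have hd1triv : ∀ (τ : G → Kˣ) g h, d1 φ τ g h = τ h * (τ (g * h))⁻¹ * τ g := by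
    intro τ g h
    rw [d1, uAct_triv φ htriv]
  -- Part 2
  have P2 : ∀ lam : A →* Kˣ, ∀ g a, lam (act g a) = uAct φ g (lam a) := by
    intro lam g a
    rw [hactid, uAct_triv φ htriv]
  -- cocycle identity for β
  have hβcoc : ∀ g h k, β g h * β (g * h) k = β h k * β g (h * k) := by
    intro g h k
    apply hι
    have e1 : s ((g * h) * k) = ι (β (g * h) k) * (ι (β g h) * s g * s h) * s k := by
      rw [hβ, hβ]
    have e2 : s (g * (h * k)) = ι (β g (h * k)) * s g * (ι (β h k) * s h * s k) := by
      rw [hβ, hβ]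
    have e3 : (g * h) * k = g * (h * k) := mul_assoc g h k
    rw [e3] at e1
    have e4 : ι (β (g * h) k) * (ι (β g h) * s g * s h) * s k
        = ι (β g (h * k)) * s g * (ι (β h k) * s h * s k) := e1.symm.trans e2
    have e5 : s g * ι (β h k) = ι (β h k) * s g := hcent _ _
    rw [map_mul, map_mul]
    have e6 : ι (β g (h * k)) * s g * (ι (β h k) * s h * s k)
        = (ι (β h k) * ι (β g (h * k))) * (s g * s h * s k) := by
      calc ι (β g (h * k)) * s g * (ι (β h k) * s h * s k)
          = ι (β g (h * k)) * (s g * ι (β h k)) * (s h * s k) := by group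
        _ = ι (β g (h * k)) * (ι (β h k) * s g) * (s h * s k) := by rw [e5]
        _ = (ι (β h k) * ι (β g (h * k))) * (s g * s h * s k) := by
            rw [← hcent (β h k) (ι (β g (h * k)))]; group
    have e7 : ι (β (g * h) k) * (ι (β g h) * s g * s h) * s k
        = (ι (β g h) * ι (β (g * h) k)) * (s g * s h * s k) := by
      rw [← hcent (β g h) (ι (β (g * h) k))]; group
    have := e4
    rw [e6, e7] at this
    exact mul_right_cancel this
  -- the map aOf
  have hdec : ∀ γ : Γ, ∃ a : A, ι a = γ * (s (π γ))⁻¹ := by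
    intro γ
    have hmem : γ * (s (π γ))⁻¹ ∈ π.ker := by
      rw [MonoidHom.mem_ker, map_mul, map_inv, hs]
      group
    rw [← hker] at hmem
    exact hmem
  set aOf : Γ → A := fun γ => (hdec γ).choose with haOfdef
  have haOf : ∀ γ, ι (aOf γ) = γ * (s (π γ))⁻¹ := fun γ => (hdec γ).choose_spec
  have hrepr : ∀ γ : Γ, γ = ι (aOf γ) * s (π γ) := by
    intro γ; rw [haOf]; group
  have haOf_mul : ∀ x y : Γ,
      aOf (x * y) = aOf x * aOf y * (β (π x) (π y))⁻¹ := by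
    intro x y
    apply hι
    have hL : ι (aOf (x * y)) = x * y * (s (π x * π y))⁻¹ := by
      rw [haOf, map_mul]
    have hR : ι (aOf x * aOf y * (β (π x) (π y))⁻¹)
        = (x * (s (π x))⁻¹) * (y * (s (π y))⁻¹) * (ι (β (π x) (π y)))⁻¹ := by
      rw [map_mul, map_mul, map_inv, haOf, haOf]
    rw [hL, hR, hβ]
    have hc : ι (aOf y) * (s (π x))⁻¹ = (s (π x))⁻¹ * ι (aOf y) := (hcent _ _).symm
    calc x * y * (ι (β (π x) (π y)) * s (π x) * s (π y))⁻¹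
        = x * (ι (aOf y) * (s (π x))⁻¹) * (ι (β (π x) (π y)))⁻¹ := by
          rw [haOf]; group
      _ = x * ((s (π x))⁻¹ * ι (aOf y)) * (ι (β (π x) (π y)))⁻¹ := by rw [hc]
      _ = x * (s (π x))⁻¹ * (y * (s (π y))⁻¹) * (ι (β (π x) (π y)))⁻¹ := by
          rw [haOf]; group
  -- s 1 is the inverse of ι (β 1 1)
  have hs1 : (s 1 : Γ)⁻¹ = ι (β 1 1) := by
    have h11 := hβ 1 1
    rw [one_mul] at h11
    have h1 : (1 : Γ) = ι (β 1 1) * s 1 :=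
      mul_right_cancel (a := (1 : Γ)) (b := s 1) (by rw [one_mul]; exact h11)
    exact inv_eq_of_mul_eq_one_left h1.symm
  -- Part 3
  have P3 : ∀ lam lam' : A →* Kˣ,
      (∃ τ : G → Kˣ, ∀ g h, lam' (β g h) = lam (β g h) * d1 φ τ g h) → lam = lam' := by
    rintro lam lam' ⟨τ, hτ⟩
    set μ : A →* Kˣ := lam' * lam⁻¹ with hμdef
    have hμ : ∀ a, μ a = lam' a * (lam a)⁻¹ := fun a => rfl
    have hμβ : ∀ g h, μ (β g h) = τ h * (τ (g * h))⁻¹ * τ g := by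
      intro g h
      rw [hμ, hτ, hd1triv, mul_inv_cancel_comm]
    -- build the homomorphism F : Γ →* Kˣ
    set f : Γ → Kˣ := fun γ => μ (aOf γ) * (τ (π γ))⁻¹ with hfdef
    have hfmul : ∀ x y : Γ, f (x * y) = f x * f y := by
      intro x y
      simp only [hfdef]
      rw [haOf_mul, map_mul, map_mul, map_inv, hμβ, map_mul]
      simp only [mul_inv_rev, inv_inv]
      simp [mul_comm, mul_left_comm, mul_assoc, mul_inv_cancel_left, inv_mul_cancel_left,
        mul_inv_cancel, inv_mul_cancel]
      rw [mul_left_comm (τ (π x * π y)) ((τ (π x))⁻¹),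
        mul_left_comm (τ (π x * π y)) ((τ (π y))⁻¹), mul_inv_cancel_left]
    set F : Γ →* Kˣ := MonoidHom.mk' f hfmul with hFdef
    have hFι : ∀ a : A, F (ι a) = 1 := by
      intro a
      exact Abelianization.commutator_subset_ker F (hstem a).2
    have hπι : ∀ a : A, π (ι a) = 1 := by
      intro a
      rw [← MonoidHom.mem_ker, ← hker]
      exact ⟨a, rfl⟩
    have haOfι : ∀ a : A, aOf (ι a) = a * β 1 1 := by
      intro a
      apply hι
      rw [haOf, hπι, map_mul, hs1]
    have key : ∀ a : A, μ a * μ (β 1 1) = τ 1 := by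
      intro a
      have h := hFι a
      have hF : F (ι a) = μ (aOf (ι a)) * (τ (π (ι a)))⁻¹ := rfl
      rw [hF, haOfι, hπι, map_mul, mul_inv_eq_one] at h
      exact h
    have hβ11 : μ (β 1 1) = τ 1 := by
      have := key 1
      rwa [map_one, one_mul] at this
    have hμ1 : ∀ a, μ a = 1 := by
      intro a
      have h := key a
      rw [hβ11] at h
      exact mul_right_cancel (a := μ a) (b := τ 1) (c := 1) (by rw [one_mul]; exact h)
    ext a
    have hh := hμ1 a
    rw [hμ, mul_inv_eq_one] at hh
    exact congrArg Units.val hh.symm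
  -- Part 1
  have P1 : ¬ (ringChar K ∣ Nat.card A) := by
    intro hdvd
    have hApos : 0 < Nat.card A := Nat.card_pos
    rcases Nat.eq_zero_or_pos (ringChar K) with h0 | hpos
    · rw [h0] at hdvd
      exact absurd (Nat.zero_dvd.mp hdvd) (by omega)
    set p := ringChar K with hpdef
    have hp : p.Prime := ((CharP.char_is_prime_or_zero K p).resolve_right (by omega))
    have : Fact p.Prime := ⟨hp⟩
    have hH2card : Nat.card (H2 φ) ≠ 0 := by rw [← hcard]; omega
    have : Finite (H2 φ) := Nat.finite_of_card_ne_zero hH2card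
    rw [hcard] at hdvd
    obtain ⟨x, hx⟩ := exists_prime_orderOf_dvd_card' (G := H2 φ) p hdvd
    obtain ⟨z, rfl⟩ := QuotientGroup.mk_surjective x
    have hxp : (QuotientGroup.mk z : H2 φ) ^ p = 1 := by
      rw [← hx]; exact pow_orderOf_eq_one _
    rw [← QuotientGroup.mk_pow, QuotientGroup.eq_one_iff, Subgroup.mem_subgroupOf] at hxp
    have hxp' : ((z : G → G → Kˣ)) ^ p ∈ B2 φ := by
      rwa [SubgroupClass.coe_pow] at hxp
    obtain ⟨τ, hτ⟩ := (mem_B2 φ).mp hxp'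
    -- choose p-th roots
    have hroot : ∀ g : G, ∃ u : Kˣ, u ^ p = τ g := by
      intro g
      obtain ⟨w, hw⟩ := IsAlgClosed.exists_pow_nat_eq ((τ g : Kˣ) : K) hp.pos
      have hw0 : w ≠ 0 := by
        intro h0'
        rw [h0', zero_pow hp.pos.ne'] at hw
        exact (τ g).ne_zero hw.symm
      refine ⟨Units.mk0 w hw0, ?_⟩
      ext
      rw [Units.val_pow_eq_pow_val]
      exact hw
    set σ : G → Kˣ := fun g => (hroot g).choose with hσdef
    have hσ : ∀ g, σ g ^ p = τ g := fun g => (hroot g).choose_spec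
    have hpinj : ∀ u v : Kˣ, u ^ p = v ^ p → u = v := by
      intro u v huv
      have hch : CharP K p := ringChar.charP K
      have := frobenius_inj K p
      have h' : frobenius K p (u : K) = frobenius K p (v : K) := by
        simp only [frobenius_def]
        rw [← Units.val_pow_eq_pow_val, ← Units.val_pow_eq_pow_val, huv]
      ext
      exact this h'
    have hzB : (z : G → G → Kˣ) ∈ B2 φ := by
      rw [mem_B2]
      refine ⟨σ, ?_⟩
      funext g h
      apply hpinj
      have h1 : ((z : G → G → Kˣ) g h) ^ p = τ h * (τ (g * h))⁻¹ * τ g := by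
        have h2 : ((z : G → G → Kˣ) ^ p) g h = d1 φ τ g h := by rw [hτ]
        rw [hd1triv] at h2
        simpa using h2
      rw [hd1triv, mul_pow, mul_pow, inv_pow, hσ, hσ, hσ, h1]
    have hz1 : (QuotientGroup.mk z : H2 φ) = 1 := by
      rw [QuotientGroup.eq_one_iff, Subgroup.mem_subgroupOf]
      exact hzB
    rw [hz1, orderOf_one] at hx
    exact hp.one_lt.ne' hx.symm
  -- characters compose with β to give cocycles
  have hcβ : ∀ lam : A →* Kˣ, IsCocycle2 φ (fun g h => lam (β g h)) := by
    intro lam g h k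
    rw [uAct_triv φ htriv]
    have e := congrArg lam (hβcoc g h k)
    rw [map_mul, map_mul] at e
    rw [mul_inv_eq_one, mul_right_comm, ← e, mul_inv_cancel_right]
  have hmemZ : ∀ lam : A →* Kˣ, (fun g h => lam (β g h)) ∈ Z2 φ := fun lam =>
    Subgroup.subset_closure (hcβ lam)
  -- extracting a coboundary from equality of classes
  have hquot : ∀ (c c' : G → G → Kˣ) (hc : c ∈ Z2 φ) (hc' : c' ∈ Z2 φ),
      (QuotientGroup.mk (⟨c, hc⟩ : Z2 φ) : H2 φ) = QuotientGroup.mk ⟨c', hc'⟩ →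
      ∃ τ : G → Kˣ, ∀ g h, c' g h = c g h * d1 φ τ g h := by
    intro c c' hc hc' hq
    rw [QuotientGroup.eq, Subgroup.mem_subgroupOf] at hq
    have h2 : c⁻¹ * c' ∈ B2 φ := by simpa using hq
    obtain ⟨τ, hτ⟩ := (mem_B2 φ).mp h2
    refine ⟨τ, fun g h => ?_⟩
    have h3 := congrFun (congrFun hτ g) h
    simp only [Pi.mul_apply, Pi.inv_apply] at h3
    rw [h3, mul_inv_cancel_left]
  -- the transgression map
  set T : (A →* Kˣ) → H2 φ := fun lam =>
    QuotientGroup.mk ⟨fun g h => lam (β g h), hmemZ lam⟩ with hTdef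
  have hTinj : Function.Injective T := by
    intro lam lam' hT
    exact P3 lam lam' (hquot _ _ (hmemZ lam) (hmemZ lam') hT)
  -- counting
  have hne : NeZero ((Monoid.exponent A : K)) := by
    constructor
    intro h0
    exact P1 ((ringChar.spec K (Monoid.exponent A)).mp h0 |>.trans
      Group.exponent_dvd_nat_card)
  obtain ⟨e⟩ := CommGroup.monoidHom_mulEquiv_of_hasEnoughRootsOfUnity A K
  have hcard2 : Nat.card (A →* Kˣ) = Nat.card (H2 φ) := by
    rw [Nat.card_congr e.toEquiv, hcard]
  have hH2fin : Finite (H2 φ) := Nat.finite_of_card_ne_zero (by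
    rw [← hcard]; exact Nat.card_pos.ne')
  have hTbij : Function.Bijective T :=
    (Nat.bijective_iff_injective_and_card T).mpr ⟨hTinj, hcard2⟩
  refine ⟨P1, P2, fun lam lam' _ _ h => P3 lam lam' h, ?_⟩
  intro α hα
  obtain ⟨lam, hlam⟩ := hTbij.2 (QuotientGroup.mk ⟨α, Subgroup.subset_closure hα⟩)
  refine ⟨lam, P2 lam, ?_⟩
  exact hquot _ _ (hmemZ lam) (Subgroup.subset_closure hα) hlam
end

section
/- Let N ⊴ G be finite groups, F a field with an action φ : G → Gal(F/L) factoring through G/N, and ρ : N → GL(n,F) an absolutely irreducible representation such that for every g ∈ G there is A_g ∈ GL(n,F) with A_g · φ_g(ρ(·)) · A_g^{-1} = ρ(g·g^{-1}) (where A_n = ρ(n) for n ∈ N, up to scalar). Fix a set-theoretic section s : G/N → G. Then the map f : G → PGL(n,F) ⋊ Gal(F/L) defined by n·s(γ) ↦ ([ρ(n)A_{s(γ)}], φ_γ) is a group homomorphism, i.e., a semi-projective representation. -/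
/-! Put `M g := ρ(r g) · A_{s(gN)}`. Since `φ` is trivial on `N` and `g = r(g) · s(gN)`, the matrix
`M g` intertwines the `φ_g`-twist of `ρ` with `ρ ∘ conj g`, and such twisted intertwiners compose, so
`M (x y)` and `M x · φ_x(M y)` both intertwine the `φ_{xy}`-twist of `ρ` with `ρ ∘ conj (x y)`. The
quotient of two invertible intertwiners of the same kind commutes with the twisted representation;
untwisting it by `φ_{xy}⁻¹` puts it in the commutant of `ρ`, which consists of scalars. -/

theorem exists_units_smul_eq_of_isUnit {K R : Type*} [Field K] [Ring R] [Module K R]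
    {x y : R} {c : K} (hx : IsUnit x) (h : x = c • y) : ∃ d : Kˣ, x = (d : K) • y := by
  rcases eq_or_ne c 0 with rfl | hc
  · rw [zero_smul] at h
    subst h
    have : Subsingleton R := subsingleton_of_zero_eq_one (isUnit_zero_iff.mp hx)
    exact ⟨1, Subsingleton.elim _ _⟩
  · exact ⟨Units.mk0 c hc, h⟩

section TwistedIntertwiner

variable {N F ι : Type*} [Group N] [Field F] [Fintype ι] [DecidableEq ι]

def IsTwistedIntertwiner (ρ : N →* GL ι F) (σ : F ≃+* F) (τ : MulAut N) (M : Matrix ι ι F) :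
    Prop :=
  ∀ z : N, SemiconjBy M ((ρ z : Matrix ι ι F).map σ) (ρ (τ z))

namespace IsTwistedIntertwiner

variable {ρ : N →* GL ι F} {σ σ' : F ≃+* F} {τ τ' : MulAut N} {M M' : Matrix ι ι F}

theorem of_conj_eq {A : GL ι F}
    (h : ∀ z, (A : Matrix ι ι F) * (ρ z : Matrix ι ι F).map σ * (A⁻¹ : GL ι F) = ρ (τ z)) :
    IsTwistedIntertwiner ρ σ τ A := fun z => by
  rw [SemiconjBy, ← h z, Units.inv_mul_cancel_right]

theorem mul_map (h : IsTwistedIntertwiner ρ σ τ M) (h' : IsTwistedIntertwiner ρ σ' τ' M') :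
    IsTwistedIntertwiner ρ (σ * σ') (τ * τ') (M * M'.map σ) := fun z => by
  have h'σ := (h' z).map σ.mapMatrix
  simp only [RingEquiv.mapMatrix_apply, Matrix.map_map] at h'σ
  exact (h (τ' z)).mul_left h'σ

theorem rep_mul (h : IsTwistedIntertwiner ρ σ τ M) (x : N) :
    IsTwistedIntertwiner ρ σ (MulAut.conj x * τ) ((ρ x : Matrix ι ι F) * M) := fun z => by
  have hx : SemiconjBy (ρ x : Matrix ι ι F) (ρ (τ z)) (ρ (MulAut.conj x (τ z))) := by
    simp only [SemiconjBy, ← Units.val_mul, ← map_mul, MulAut.conj_apply, inv_mul_cancel_right]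
  exact hx.mul_left (h z)

theorem exists_units_smul_eq
    (hirr : ∀ B : Matrix ι ι F, (∀ x, Commute B (ρ x)) → ∃ c : F, B = c • 1)
    {V : Matrix ι ι F} (hM : IsTwistedIntertwiner ρ σ τ M) (hV : IsTwistedIntertwiner ρ σ τ V)
    (hMu : IsUnit M) (hVu : IsUnit V) : ∃ d : Fˣ, M = (d : F) • V := by
  obtain ⟨V, rfl⟩ := hVu
  have hW : ∀ z, Commute ((V⁻¹ : GL ι F) * M) ((ρ z : Matrix ι ι F).map σ) := fun z =>
    (hV z).units_inv_symm_left.mul_left (hM z)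
  obtain ⟨c, hc⟩ := hirr (((V⁻¹ : GL ι F) * M).map σ.symm) fun z => by
    simpa [Matrix.map_map, Function.comp_def] using (hW z).map σ.symm.mapMatrix
  have hWc : (V⁻¹ : GL ι F) * M = σ c • 1 := by
    simpa [Matrix.map_map, Function.comp_def, Matrix.smul_one_eq_diagonal] using
      congrArg (·.map σ) hc
  refine exists_units_smul_eq_of_isUnit hMu (c := σ c) ?_
  rw [← Units.mul_inv_cancel_left V M, hWc, Matrix.mul_smul, Matrix.mul_one]

end IsTwistedIntertwiner

end TwistedIntertwiner

theorem crossedProjective_representation_general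
    {G F : Type*} [Group G] [Field F] {n : ℕ}
    (N : Subgroup G) (hN : N.Normal)
    (φ : G →* (F ≃+* F)) (hφN : ∀ x : N, φ (x : G) = 1)
    (ρ : N →* Matrix.GeneralLinearGroup (Fin n) F)
    (hirr : ∀ B : Matrix (Fin n) (Fin n) F,
      (∀ x : N, B * (ρ x : Matrix (Fin n) (Fin n) F)
        = (ρ x : Matrix (Fin n) (Fin n) F) * B) → ∃ c : F, B = c • (1 : Matrix (Fin n) (Fin n) F))
    (A : G → Matrix.GeneralLinearGroup (Fin n) F)
    (hconj : ∀ (g : G) (x : N),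
      (A g : Matrix (Fin n) (Fin n) F) *
          ((ρ x : Matrix (Fin n) (Fin n) F).map (φ g)) *
          ((A g)⁻¹ : Matrix.GeneralLinearGroup (Fin n) F)
        = (ρ (⟨g * x * g⁻¹, hN.conj_mem x.1 x.2 g⟩ : N) : Matrix (Fin n) (Fin n) F))
    (s : G ⧸ N → G)
    (r : G → N) (hr : ∀ x : G, (r x : G) * s (QuotientGroup.mk x) = x) :
    ∀ x y : G, ∃ c : Fˣ,
      ((ρ (r (x * y)) : Matrix (Fin n) (Fin n) F) *
          (A (s (QuotientGroup.mk (x * y))) : Matrix (Fin n) (Fin n) F))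
        = (c : F) •
          (((ρ (r x) : Matrix (Fin n) (Fin n) F) *
              (A (s (QuotientGroup.mk x)) : Matrix (Fin n) (Fin n) F)) *
            (((ρ (r y) : Matrix (Fin n) (Fin n) F) *
              (A (s (QuotientGroup.mk y)) : Matrix (Fin n) (Fin n) F)).map (φ x))) := by
  intro x y
  have hA (g : G) : IsTwistedIntertwiner ρ (φ g) (MulAut.conjNormal (H := N) g) (A g) :=
    .of_conj_eq fun z => by rw [hconj]; congr 3
  have hM (g : G) : IsTwistedIntertwiner ρ (φ g) (MulAut.conjNormal (H := N) g)
      ((ρ (r g) : Matrix (Fin n) (Fin n) F) * A (s g)) := by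
    have hφ : φ (s g) = φ g := by
      conv_rhs => rw [← hr g]
      rw [map_mul, hφN, one_mul]
    have hτ : MulAut.conj (r g) * MulAut.conjNormal (H := N) (s g) = MulAut.conjNormal g := by
      conv_rhs => rw [← hr g]
      rw [map_mul]
      congr 1
      ext
      simp
    simpa only [hφ, hτ] using (hA (s g)).rep_mul (r g)
  have hprod := (hM x).mul_map (hM y)
  rw [← map_mul, ← map_mul] at hprod
  have hunit (g : G) : IsUnit ((ρ (r g) : Matrix (Fin n) (Fin n) F) * A (s g)) :=
    (Units.isUnit _).mul (Units.isUnit _)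
  exact (hM (x * y)).exists_units_smul_eq hirr hprod (hunit _)
    ((hunit x).mul ((hunit y).map (φ x).mapMatrix))

/-- Isaacs' crossed-projective representation (Proposition `stabRep`).  Let
`N ⊴ G` be finite groups, `F` a field with an action `φ : G → Gal(F/L)` (encoded
as field automorphisms of `F`) that is trivial on `N` (so it factors through
`G/N`), and `ρ : N → GL(n,F)` an (absolutely) irreducible representation, i.e.
its commutant consists of scalar matrices.  Suppose for every `g ∈ G` there is a
matrix `A g ∈ GL(n,F)` with `A g · φ_g(ρ(x)) · (A g)⁻¹ = ρ(g x g⁻¹)` for all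
`x ∈ N`, and with `A x` a scalar multiple of `ρ x` for `x ∈ N`.  Fix a
set-theoretic section `s : G/N → G` with retraction `r` (so `x = r x · s(x N)`).
Then the map `f : G → PGL(n,F) ⋊ Gal(F/L)` given by
`n·s(γ) ↦ ([ρ(n)·A_{s(γ)}], φ_γ)` is a group homomorphism, i.e. for
`M x := ρ(r x)·A_{s(xN)}` we have `M (x y) = c • (M x · φ_x(M y))` for some
scalar `c ∈ Fˣ` (the `Gal`-components multiply automatically since `φ` is a
homomorphism). -/
theorem crossedProjective_representation
    {G F : Type*} [Group G] [Finite G] [Field F] {n : ℕ}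
    (N : Subgroup G) (hN : N.Normal)
    (φ : G →* (F ≃+* F)) (hφN : ∀ x : N, φ (x : G) = 1)
    (ρ : N →* Matrix.GeneralLinearGroup (Fin n) F)
    (hirr : ∀ B : Matrix (Fin n) (Fin n) F,
      (∀ x : N, B * (ρ x : Matrix (Fin n) (Fin n) F)
        = (ρ x : Matrix (Fin n) (Fin n) F) * B) → ∃ c : F, B = c • (1 : Matrix (Fin n) (Fin n) F))
    (A : G → Matrix.GeneralLinearGroup (Fin n) F)
    (hconj : ∀ (g : G) (x : N),
      (A g : Matrix (Fin n) (Fin n) F) *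
          ((ρ x : Matrix (Fin n) (Fin n) F).map (φ g)) *
          ((A g)⁻¹ : Matrix.GeneralLinearGroup (Fin n) F)
        = (ρ (⟨g * x * g⁻¹, hN.conj_mem x.1 x.2 g⟩ : N) : Matrix (Fin n) (Fin n) F))
    (hAN : ∀ x : N, ∃ c : Fˣ,
      (A (x : G) : Matrix (Fin n) (Fin n) F) = (c : F) • (ρ x : Matrix (Fin n) (Fin n) F))
    (s : G ⧸ N → G) (hs : ∀ γ : G ⧸ N, (QuotientGroup.mk (s γ) : G ⧸ N) = γ)
    (r : G → N) (hr : ∀ x : G, (r x : G) * s (QuotientGroup.mk x) = x) :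
    ∀ x y : G, ∃ c : Fˣ,
      ((ρ (r (x * y)) : Matrix (Fin n) (Fin n) F) *
          (A (s (QuotientGroup.mk (x * y))) : Matrix (Fin n) (Fin n) F))
        = (c : F) •
          (((ρ (r x) : Matrix (Fin n) (Fin n) F) *
              (A (s (QuotientGroup.mk x)) : Matrix (Fin n) (Fin n) F)) *
            (((ρ (r y) : Matrix (Fin n) (Fin n) F) *
              (A (s (QuotientGroup.mk y)) : Matrix (Fin n) (Fin n) F)).map (φ x))) :=
  crossedProjective_representation_general N hN φ hφN ρ hirr A hconj s r hr
end
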